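/- The LTS3 scheme conserves total mass exactly: under the flux-form and locality assumptions, for every coarse step Δt, every M ≥ 1, and every initial state x⁰, one LTS3 step satisfies m(x^new) = m(x⁰), where m(x) = Σ_{i∈Cell} A_i·x_i. -/

import Mathlib

open scoped Classical

/-- The substepping recursion of one LTS3 step. Starting from the state `x0` and the
stage vectors `x1`, `x2`, with coarse step `Δt` and substep count `M`, it returns the
quintuple `(a^k, P^k, Q^k, R^k, z^{k-1})`: the fine solution after `k` substeps
(meaningful on `F`), the three accumulated interface correction terms (meaningful on
`I₁ ∪ I₂`), and the last third-stage vector `z` computed. -/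
noncomputable def lts3Sub {ι : Type*} (F I₁ : Set ι)
    (G : (ι → ℝ) → ι → ℝ) (Δt : ℝ) (M : ℕ) (x0 x1 x2 : ι → ℝ) :
    ℕ → ((ι → ℝ) × (ι → ℝ) × (ι → ℝ) × (ι → ℝ) × (ι → ℝ))
  | 0 => (x0, fun _ => 0, fun _ => 0, fun _ => 0, x0)
  | k + 1 =>
    let s := lts3Sub F I₁ G Δt M x0 x1 x2 k
    let a := s.1
    let P := s.2.1
    let Q := s.2.2.1
    let R := s.2.2.2.1
    -- interpolation coefficients
    let αk : ℝ := (k : ℝ) / M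
    let αt : ℝ := (k : ℝ) ^ 2 / (M : ℝ) ^ 2
    let βk : ℝ := ((k : ℝ) + 1) / M
    let βt : ℝ := (k : ℝ) * ((k : ℝ) + 2) / (M : ℝ) ^ 2
    let γk : ℝ := (2 * (k : ℝ) + 1) / (2 * M)
    let γt : ℝ := (2 * (k : ℝ) ^ 2 + 2 * (k : ℝ) + 1) / (2 * (M : ℝ) ^ 2)
    -- v^k: a^k on F, the α-interpolant on I₁, x⁰ on I₂ ∪ C
    let v : ι → ℝ := fun i =>
      if i ∈ F then a i
      else if i ∈ I₁ then
        (1 - αk - αt) * x0 i + (αk - αt) * x1 i + 2 * αt * x2 i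
      else x0 i
    -- b^k = v^k + (Δt/M)·G(v^k) (used on F)
    let b : ι → ℝ := fun i => v i + (Δt / M) * G v i
    -- w^k: b^k on F, the β-interpolant on I₁, x¹ on I₂ ∪ C
    let w : ι → ℝ := fun i =>
      if i ∈ F then b i
      else if i ∈ I₁ then
        (1 - βk - βt) * x0 i + (βk - βt) * x1 i + 2 * βt * x2 i
      else x1 i
    -- c^k = (3/4)a^k + (1/4)b^k + (1/4)(Δt/M)·G(w^k) (used on F)
    let c : ι → ℝ := fun i =>
      (3 / 4) * a i + (1 / 4) * b i + (1 / 4) * (Δt / M) * G w i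
    -- z^k: c^k on F, the γ-interpolant on I₁, x² on I₂ ∪ C
    let z : ι → ℝ := fun i =>
      if i ∈ F then c i
      else if i ∈ I₁ then
        (1 - γk - γt) * x0 i + (γk - γt) * x1 i + 2 * γt * x2 i
      else x2 i
    (fun i => (1 / 3) * a i + (2 / 3) * c i + (2 / 3) * (Δt / M) * G z i,
     fun i => P i + G v i,
     fun i => Q i + G w i,
     fun i => R i + G z i,
     z)

/-- One step of the third-order local time-stepping scheme LTS3, with fine region `F`,
fine cells nearest interface 1 `Fu = F̲ ⊆ F`, interface regions `I₁`, `I₂`, coarse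
region `C`, right-hand side `G`, coarse step `Δt` and `M` fine substeps per coarse
step. -/
noncomputable def lts3Step {ι : Type*} (F Fu I₁ I₂ C : Set ι)
    (G : (ι → ℝ) → ι → ℝ) (Δt : ℝ) (M : ℕ) (x0 : ι → ℝ) : ι → ℝ :=
  -- x¹ = x⁰ + Δt·G(x⁰) on F̲ ∪ I₁ ∪ I₂ ∪ C, and x¹ = x⁰ on F \ F̲
  let x1 : ι → ℝ := fun i =>
    if i ∈ F ∧ i ∉ Fu then x0 i else x0 i + Δt * G x0 i
  -- x² = (3/4)x⁰ + (1/4)x¹ + (1/4)Δt·G(x¹) (used on I₁ ∪ I₂ ∪ C)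
  let x2 : ι → ℝ := fun i =>
    (3 / 4) * x0 i + (1 / 4) * x1 i + (1 / 4) * Δt * G x1 i
  let s := lts3Sub F I₁ G Δt M x0 x1 x2 M
  fun i =>
    if i ∈ F then s.1 i
    else if i ∈ C then
      (1 / 3) * x0 i + (2 / 3) * x2 i + (2 / 3) * Δt * G s.2.2.2.2 i
    else
      x0 i + (Δt / M) *
        ((1 / 6) * s.2.1 i + (1 / 6) * s.2.2.1 i + (2 / 3) * s.2.2.2.1 i)

/-! Every component of the state, fine, interface or coarse, ends the step as `x⁰` plus `Δt / M`
times the sum over the substeps `k` of one and the same combination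
`(1/6) G(v^k) + (1/6) G(w^k) + (2/3) G(z^k)`. On `F` this is the Shu–Osher form of SSP-RK3
unrolled, on the interfaces it is how `P`, `Q`, `R` accumulate, and on a coarse cell locality
turns `G(v^k)`, `G(w^k)`, `G(z^k)` into `G(x⁰)`, `G(x¹)`, `G(x²)`, so the `M` increments add up
to exactly one coarse SSP-RK3 step. In flux form `Σ_i A_i G(x)_i = 0` for every state `x`, so the
mass changes by a sum of zeros. -/

section FluxForm

variable {ι Ed : Type*} [Fintype Ed] (Cell : Finset ι) (c₁ c₂ : Ed → ι) (A : ι → ℝ)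

/-- Every edge flux leaves one cell and enters another, so area-weighted divergences telescope. -/
theorem sum_mul_eq_zero_of_flux_form (hc₁ : ∀ e, c₁ e ∈ Cell) (hc₂ : ∀ e, c₂ e ∈ Cell)
    (hA : ∀ i ∈ Cell, A i ≠ 0) (φ : Ed → ℝ) (g : ι → ℝ)
    (hg : ∀ i ∈ Cell, g i =
      -(1 / A i) * ((∑ e ∈ Finset.univ.filter (fun e => c₁ e = i), φ e) -
                    (∑ e ∈ Finset.univ.filter (fun e => c₂ e = i), φ e))) :
    ∑ i ∈ Cell, A i * g i = 0 := by
  have hcell : ∀ i ∈ Cell, A i * g i =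
      (∑ e ∈ Finset.univ.filter (fun e => c₂ e = i), φ e) -
        ∑ e ∈ Finset.univ.filter (fun e => c₁ e = i), φ e := by
    intro i hi
    rw [hg i hi]
    field_simp [hA i hi]
    ring
  rw [Finset.sum_congr rfl hcell, Finset.sum_sub_distrib,
    Finset.sum_fiberwise_of_maps_to (fun e _ => hc₂ e),
    Finset.sum_fiberwise_of_maps_to (fun e _ => hc₁ e), sub_self]

theorem flux_form_apply_congr (G : (ι → ℝ) → ι → ℝ) (l : Ed → ℝ) (Fl : Ed → (ι → ℝ) → ℝ)
    {i : ι} (hflux : ∀ x : ι → ℝ, G x i =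
      -(1 / A i) * ((∑ e ∈ Finset.univ.filter (fun e => c₁ e = i), l e * Fl e x) -
                    (∑ e ∈ Finset.univ.filter (fun e => c₂ e = i), l e * Fl e x)))
    {S : Set ι}
    (hlocal : ∀ e, (c₁ e = i ∨ c₂ e = i) → ∀ x y : ι → ℝ, (∀ j ∈ S, x j = y j) → Fl e x = Fl e y)
    {x y : ι → ℝ} (hxy : ∀ j ∈ S, x j = y j) :
    G x i = G y i := by
  rw [hflux x, hflux y]
  congr 2 <;> refine Finset.sum_congr rfl fun e he => ?_ <;>
    rw [hlocal e (by simp_all) x y hxy]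

end FluxForm

theorem sum_mul_eq_of_eq_add_mul_sum {ι κ : Type*} (Cell : Finset ι) (s : Finset κ)
    (A x y : ι → ℝ) (c : ℝ) (d : κ → ι → ℝ) (hy : ∀ i ∈ Cell, y i = x i + c * ∑ k ∈ s, d k i)
    (hd : ∀ k, ∑ i ∈ Cell, A i * d k i = 0) :
    ∑ i ∈ Cell, A i * y i = ∑ i ∈ Cell, A i * x i := by
  calc ∑ i ∈ Cell, A i * y i
      = ∑ i ∈ Cell, (A i * x i + c * ∑ k ∈ s, A i * d k i) :=
        Finset.sum_congr rfl fun i hi => by rw [hy i hi, ← Finset.mul_sum]; ring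
    _ = ∑ i ∈ Cell, A i * x i + c * ∑ k ∈ s, ∑ i ∈ Cell, A i * d k i := by
        rw [Finset.sum_add_distrib, ← Finset.mul_sum, Finset.sum_comm]
    _ = ∑ i ∈ Cell, A i * x i := by simp [hd]

namespace LTS3

variable {ι : Type*} (F Fu I₁ : Set ι) (G : (ι → ℝ) → ι → ℝ) (Δt : ℝ) (M : ℕ)
  (x0 x1 x2 : ι → ℝ)

noncomputable def firstStage : ι → ℝ := fun i =>
  if i ∈ F ∧ i ∉ Fu then x0 i else x0 i + Δt * G x0 i

noncomputable def secondStage : ι → ℝ := fun i =>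
  (3 / 4) * x0 i + (1 / 4) * firstStage F Fu G Δt x0 i +
    (1 / 4) * Δt * G (firstStage F Fu G Δt x0) i

noncomputable def interp (θ θ' : ℝ) : ι → ℝ := fun i =>
  (1 - θ - θ') * x0 i + (θ - θ') * x1 i + 2 * θ' * x2 i

/- The stage vectors `v^k`, `w^k`, `z^k` of substep `k`; `b^k` and `c^k` are inlined so that
`lts3Sub_succ` holds by `rfl`. -/

noncomputable def stageV (k : ℕ) : ι → ℝ := fun i =>
  if i ∈ F then (lts3Sub F I₁ G Δt M x0 x1 x2 k).1 i
  else if i ∈ I₁ then interp x0 x1 x2 ((k : ℝ) / M) ((k : ℝ) ^ 2 / (M : ℝ) ^ 2) i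
  else x0 i

noncomputable def stageW (k : ℕ) : ι → ℝ := fun i =>
  if i ∈ F then stageV F I₁ G Δt M x0 x1 x2 k i + (Δt / M) * G (stageV F I₁ G Δt M x0 x1 x2 k) i
  else if i ∈ I₁ then
    interp x0 x1 x2 (((k : ℝ) + 1) / M) ((k : ℝ) * ((k : ℝ) + 2) / (M : ℝ) ^ 2) i
  else x1 i

noncomputable def stageZ (k : ℕ) : ι → ℝ := fun i =>
  if i ∈ F then
    (3 / 4) * (lts3Sub F I₁ G Δt M x0 x1 x2 k).1 i +
      (1 / 4) * (stageV F I₁ G Δt M x0 x1 x2 k i +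
        (Δt / M) * G (stageV F I₁ G Δt M x0 x1 x2 k) i) +
      (1 / 4) * (Δt / M) * G (stageW F I₁ G Δt M x0 x1 x2 k) i
  else if i ∈ I₁ then
    interp x0 x1 x2 ((2 * (k : ℝ) + 1) / (2 * M))
      ((2 * (k : ℝ) ^ 2 + 2 * (k : ℝ) + 1) / (2 * (M : ℝ) ^ 2)) i
  else x2 i

noncomputable def increment (k : ℕ) : ι → ℝ := fun i =>
  (1 / 6) * G (stageV F I₁ G Δt M x0 x1 x2 k) i + (1 / 6) * G (stageW F I₁ G Δt M x0 x1 x2 k) i +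
    (2 / 3) * G (stageZ F I₁ G Δt M x0 x1 x2 k) i

theorem lts3Sub_succ (k : ℕ) :
    lts3Sub F I₁ G Δt M x0 x1 x2 (k + 1) =
      (fun i => (1 / 3) * (lts3Sub F I₁ G Δt M x0 x1 x2 k).1 i +
          (2 / 3) * ((3 / 4) * (lts3Sub F I₁ G Δt M x0 x1 x2 k).1 i +
            (1 / 4) * (stageV F I₁ G Δt M x0 x1 x2 k i +
              (Δt / M) * G (stageV F I₁ G Δt M x0 x1 x2 k) i) +
            (1 / 4) * (Δt / M) * G (stageW F I₁ G Δt M x0 x1 x2 k) i) +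
          (2 / 3) * (Δt / M) * G (stageZ F I₁ G Δt M x0 x1 x2 k) i,
       fun i => (lts3Sub F I₁ G Δt M x0 x1 x2 k).2.1 i + G (stageV F I₁ G Δt M x0 x1 x2 k) i,
       fun i => (lts3Sub F I₁ G Δt M x0 x1 x2 k).2.2.1 i + G (stageW F I₁ G Δt M x0 x1 x2 k) i,
       fun i => (lts3Sub F I₁ G Δt M x0 x1 x2 k).2.2.2.1 i + G (stageZ F I₁ G Δt M x0 x1 x2 k) i,
       stageZ F I₁ G Δt M x0 x1 x2 k) :=
  rfl

variable {F I₁ G Δt M x0 x1 x2}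

theorem fst_lts3Sub_succ_of_mem {i : ι} (hi : i ∈ F) (k : ℕ) :
    (lts3Sub F I₁ G Δt M x0 x1 x2 (k + 1)).1 i =
      (lts3Sub F I₁ G Δt M x0 x1 x2 k).1 i + Δt / M * increment F I₁ G Δt M x0 x1 x2 k i := by
  have hv : stageV F I₁ G Δt M x0 x1 x2 k i = (lts3Sub F I₁ G Δt M x0 x1 x2 k).1 i := if_pos hi
  simp only [lts3Sub_succ, hv, increment]
  ring

theorem fst_lts3Sub_of_mem {i : ι} (hi : i ∈ F) (k : ℕ) :
    (lts3Sub F I₁ G Δt M x0 x1 x2 k).1 i =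
      x0 i + Δt / M * ∑ j ∈ Finset.range k, increment F I₁ G Δt M x0 x1 x2 j i := by
  induction k with
  | zero => simp [lts3Sub]
  | succ k ih => rw [fst_lts3Sub_succ_of_mem hi, ih, Finset.sum_range_succ]; ring

theorem correction_lts3Sub (i : ι) (k : ℕ) :
    (1 / 6) * (lts3Sub F I₁ G Δt M x0 x1 x2 k).2.1 i +
        (1 / 6) * (lts3Sub F I₁ G Δt M x0 x1 x2 k).2.2.1 i +
        (2 / 3) * (lts3Sub F I₁ G Δt M x0 x1 x2 k).2.2.2.1 i =
      ∑ j ∈ Finset.range k, increment F I₁ G Δt M x0 x1 x2 j i := by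
  induction k with
  | zero => simp [lts3Sub]
  | succ k ih =>
    rw [Finset.sum_range_succ, ← ih]
    simp only [lts3Sub_succ, increment]
    ring

theorem increment_eq_of_congr {S : Set ι} (hS : ∀ j ∈ S, j ∉ F ∧ j ∉ I₁) {i : ι}
    (hGi : ∀ x y : ι → ℝ, (∀ j ∈ S, x j = y j) → G x i = G y i) (k : ℕ) :
    increment F I₁ G Δt M x0 x1 x2 k i =
      (1 / 6) * G x0 i + (1 / 6) * G x1 i + (2 / 3) * G x2 i := by
  have hv : G (stageV F I₁ G Δt M x0 x1 x2 k) i = G x0 i :=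
    hGi _ _ fun j hj => by simp [stageV, (hS j hj).1, (hS j hj).2]
  have hw : G (stageW F I₁ G Δt M x0 x1 x2 k) i = G x1 i :=
    hGi _ _ fun j hj => by simp [stageW, (hS j hj).1, (hS j hj).2]
  have hz : G (stageZ F I₁ G Δt M x0 x1 x2 k) i = G x2 i :=
    hGi _ _ fun j hj => by simp [stageZ, (hS j hj).1, (hS j hj).2]
  rw [increment, hv, hw, hz]

theorem sum_mul_increment_eq_zero {Cell : Finset ι} {A : ι → ℝ}
    (hG : ∀ x, ∑ i ∈ Cell, A i * G x i = 0) (k : ℕ) :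
    ∑ i ∈ Cell, A i * increment F I₁ G Δt M x0 x1 x2 k i = 0 := by
  simp only [increment, mul_add, Finset.sum_add_distrib, mul_left_comm (A _), ← Finset.mul_sum,
    hG, mul_zero, add_zero]

variable (I₂ C : Set ι)

theorem lts3Step_apply (i : ι) :
    lts3Step F Fu I₁ I₂ C G Δt M x0 i =
      letI x1 := firstStage F Fu G Δt x0
      letI x2 := secondStage F Fu G Δt x0
      if i ∈ F then (lts3Sub F I₁ G Δt M x0 x1 x2 M).1 i
      else if i ∈ C then
        (1 / 3) * x0 i + (2 / 3) * x2 i +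
          (2 / 3) * Δt * G (lts3Sub F I₁ G Δt M x0 x1 x2 M).2.2.2.2 i
      else
        x0 i + (Δt / M) *
          ((1 / 6) * (lts3Sub F I₁ G Δt M x0 x1 x2 M).2.1 i +
            (1 / 6) * (lts3Sub F I₁ G Δt M x0 x1 x2 M).2.2.1 i +
            (2 / 3) * (lts3Sub F I₁ G Δt M x0 x1 x2 M).2.2.2.1 i) :=
  rfl

variable {Fu I₂ C}

theorem lts3Step_apply_eq_add_sum_increment (hM : M ≠ 0) {S : Set ι}
    (hS : ∀ j ∈ S, j ∉ F ∧ j ∉ I₁) {i : ι} (hCF : i ∈ C → i ∉ F)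
    (hGi : i ∈ C → ∀ x y : ι → ℝ, (∀ j ∈ S, x j = y j) → G x i = G y i) :
    lts3Step F Fu I₁ I₂ C G Δt M x0 i =
      x0 i + Δt / M * ∑ k ∈ Finset.range M,
        increment F I₁ G Δt M x0 (firstStage F Fu G Δt x0) (secondStage F Fu G Δt x0) k i := by
  rw [lts3Step_apply]
  split_ifs with hF hC
  · exact fst_lts3Sub_of_mem hF M
  · -- `(1/3) x⁰ + (2/3) x² + (2/3) Δt G(x²) = x⁰ + Δt ((1/6) G(x⁰) + (1/6) G(x¹) + (2/3) G(x²))`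
    obtain ⟨m, rfl⟩ := Nat.exists_eq_succ_of_ne_zero hM
    have hz : G (lts3Sub F I₁ G Δt (m + 1) x0 (firstStage F Fu G Δt x0)
        (secondStage F Fu G Δt x0) (m + 1)).2.2.2.2 i = G (secondStage F Fu G Δt x0) i :=
      hGi hC _ _ fun j hj => by simp [lts3Sub_succ, stageZ, hS j hj]
    simp only [hz, increment_eq_of_congr hS (hGi hC), Finset.sum_const, Finset.card_range,
      nsmul_eq_mul, secondStage, firstStage, hCF hC, false_and, if_false]
    field_simp
    ring
  · rw [correction_lts3Sub]

end LTS3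

theorem lts3_conserves_total_mass_general {ι : Type*}
    (F Fu I₁ I₂ C : Set ι)
    (hFI₂ : F ∩ I₂ = ∅) (hFC : F ∩ C = ∅)
    (hI₁I₂ : I₁ ∩ I₂ = ∅) (hI₁C : I₁ ∩ C = ∅)
    (G : (ι → ℝ) → ι → ℝ)
    {Ed : Type*} [Fintype Ed] (Cell : Finset ι)
    (c₁ c₂ : Ed → ι) (hc₁ : ∀ e, c₁ e ∈ Cell) (hc₂ : ∀ e, c₂ e ∈ Cell)
    (A : ι → ℝ) (hA : ∀ i ∈ Cell, A i ≠ 0)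
    (l : Ed → ℝ) (Fl : Ed → (ι → ℝ) → ℝ)
    (hflux : ∀ i ∈ Cell, ∀ x : ι → ℝ, G x i =
      -(1 / A i) * ((∑ e ∈ Finset.univ.filter (fun e => c₁ e = i), l e * Fl e x) -
                    (∑ e ∈ Finset.univ.filter (fun e => c₂ e = i), l e * Fl e x)))
    (hlocal : ∀ e : Ed, (c₁ e ∈ C ∨ c₂ e ∈ C) →
      ∀ x y : ι → ℝ, (∀ j ∈ I₂ ∪ C, x j = y j) → Fl e x = Fl e y) :
    ∀ (Δt : ℝ) (M : ℕ), 1 ≤ M → ∀ x0 : ι → ℝ,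
      ∑ i ∈ Cell, A i * lts3Step F Fu I₁ I₂ C G Δt M x0 i =
        ∑ i ∈ Cell, A i * x0 i := by
  intro Δt M hM x0
  have hS : ∀ j ∈ I₂ ∪ C, j ∉ F ∧ j ∉ I₁ := by
    simp only [Set.eq_empty_iff_forall_notMem, Set.mem_inter_iff, not_and] at hFI₂ hFC hI₁I₂ hI₁C
    rintro j (hj | hj)
    exacts [⟨fun h => hFI₂ j h hj, fun h => hI₁I₂ j h hj⟩,
      ⟨fun h => hFC j h hj, fun h => hI₁C j h hj⟩]
  have hcoarse : ∀ i ∈ Cell, i ∈ C → ∀ x y : ι → ℝ, (∀ j ∈ I₂ ∪ C, x j = y j) → G x i = G y i :=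
    fun i hi hC x y hxy => flux_form_apply_congr c₁ c₂ A G l Fl (hflux i hi)
      (fun e he => hlocal e (by rcases he with h | h <;> simp [h, hC])) hxy
  have hmass : ∀ x, ∑ i ∈ Cell, A i * G x i = 0 := fun x =>
    sum_mul_eq_zero_of_flux_form Cell c₁ c₂ A hc₁ hc₂ hA _ _ fun i hi => hflux i hi x
  exact sum_mul_eq_of_eq_add_mul_sum Cell _ A _ _ _ _
    (fun i hi => LTS3.lts3Step_apply_eq_add_sum_increment (by omega) hS
      (fun hC => (hS i (Or.inr hC)).1) (hcoarse i hi))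
    (LTS3.sum_mul_increment_eq_zero hmass)

/-- Exact mass conservation for LTS3: if the right-hand side `G` is in flux form on the
cells (TRiSK discrete divergence, with each edge having two distinct incident cells),
and every flux on an edge touching a coarse cell depends only on components in
`I₂ ∪ C`, then one LTS3 step conserves the total mass `m(x) = Σ_{i ∈ Cell} A_i·x_i`
exactly, for every coarse step `Δt`, every `M ≥ 1` and every initial state `x⁰`. -/
theorem lts3_conserves_total_mass {ι : Type*} [Fintype ι]
    (F Fu I₁ I₂ C : Set ι) (hFu : Fu ⊆ F)
    (hcover : ∀ i : ι, i ∈ F ∨ i ∈ I₁ ∨ i ∈ I₂ ∨ i ∈ C)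
    (hFI₁ : F ∩ I₁ = ∅) (hFI₂ : F ∩ I₂ = ∅) (hFC : F ∩ C = ∅)
    (hI₁I₂ : I₁ ∩ I₂ = ∅) (hI₁C : I₁ ∩ C = ∅) (hI₂C : I₂ ∩ C = ∅)
    (G : (ι → ℝ) → ι → ℝ)
    {Ed : Type*} [Fintype Ed] (Cell : Finset ι)
    (c₁ c₂ : Ed → ι) (hc₁ : ∀ e, c₁ e ∈ Cell) (hc₂ : ∀ e, c₂ e ∈ Cell)
    (hcne : ∀ e, c₁ e ≠ c₂ e)
    (A : ι → ℝ) (hA : ∀ i ∈ Cell, A i ≠ 0)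
    (l : Ed → ℝ) (Fl : Ed → (ι → ℝ) → ℝ)
    (hflux : ∀ i ∈ Cell, ∀ x : ι → ℝ, G x i =
      -(1 / A i) * ((∑ e ∈ Finset.univ.filter (fun e => c₁ e = i), l e * Fl e x) -
                    (∑ e ∈ Finset.univ.filter (fun e => c₂ e = i), l e * Fl e x)))
    (hlocal : ∀ e : Ed, (c₁ e ∈ C ∨ c₂ e ∈ C) →
      ∀ x y : ι → ℝ, (∀ j ∈ I₂ ∪ C, x j = y j) → Fl e x = Fl e y) :
    ∀ (Δt : ℝ) (M : ℕ), 1 ≤ M → ∀ x0 : ι → ℝ,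
      ∑ i ∈ Cell, A i * lts3Step F Fu I₁ I₂ C G Δt M x0 i =
        ∑ i ∈ Cell, A i * x0 i :=
  lts3_conserves_total_mass_general F Fu I₁ I₂ C hFI₂ hFC hI₁I₂ hI₁C G Cell c₁ c₂ hc₁ hc₂ A hA l Fl
    hflux hlocal
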